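/- For every S ∈ 𝒮^T, the transformed path T S lies in 𝒮^{T⁻¹}, and T⁻¹(T S) = S if and only if limsup_{n→+∞} S n = sup_{n∈ℤ} S n (as elements of ℤ ∪ {+∞}). Dually, for every S ∈ 𝒮^{T⁻¹}, T⁻¹ S lies in 𝒮^T, and T(T⁻¹ S) = S if and only if liminf_{n→−∞} S n = inf_{n∈ℤ} S n. Consequently, the set of S ∈ 𝒮⁰ on which T S and T⁻¹ S are both defined and T⁻¹(T S) = S = T(T⁻¹ S) equals {S ∈ 𝒮⁰ : {S n : n ≤ 0} is bounded above, {S n : n ≥ 0} is bounded below, limsup_{n→+∞} S n = sup_{n∈ℤ} S n, and liminf_{n→−∞} S n = inf_{n∈ℤ} S n}. -/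

import Mathlib

/-- The past maximum `M n = sup_{m ≤ n} S m` of a two-sided path. -/
noncomputable def ballMax (S : ℤ → ℤ) (n : ℤ) : ℤ := sSup (S '' Set.Iic n)

/-- The future minimum `I n = inf_{m ≥ n} S m` of a two-sided path. -/
noncomputable def ballMin (S : ℤ → ℤ) (n : ℤ) : ℤ := sInf (S '' Set.Ici n)

/-- Pitman's transform `(TS) n = 2 M n - S n - 2 M 0`. -/
noncomputable def Tbb (S : ℤ → ℤ) : ℤ → ℤ := fun n => 2 * ballMax S n - S n - 2 * ballMax S 0

/-- The inverse transform `(T⁻¹S) n = 2 I n - S n - 2 I 0`. -/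
noncomputable def TbbInv (S : ℤ → ℤ) : ℤ → ℤ := fun n => 2 * ballMin S n - S n - 2 * ballMin S 0

/-- `S ∈ 𝒮⁰`: a two-sided nearest-neighbour path started at `0`. -/
def inS0 (S : ℤ → ℤ) : Prop := S 0 = 0 ∧ ∀ n : ℤ, |S n - S (n - 1)| = 1

/-- `limsup_{n → +∞} S n = sup_{n ∈ ℤ} S n`, as elements of `ℤ ∪ {+∞}` (via `EReal`). -/
def limsupEq (S : ℤ → ℤ) : Prop :=
  Filter.limsup (fun n : ℤ => ((S n : ℝ) : EReal)) Filter.atTop = ⨆ n : ℤ, ((S n : ℝ) : EReal)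

/-- `liminf_{n → -∞} S n = inf_{n ∈ ℤ} S n`, as elements of `ℤ ∪ {-∞}` (via `EReal`). -/
def liminfEq (S : ℤ → ℤ) : Prop :=
  Filter.liminf (fun n : ℤ => ((S n : ℝ) : EReal)) Filter.atBot = ⨅ n : ℤ, ((S n : ℝ) : EReal)
/-!
Write `M` for the running maximum of `S`. As `S` is a nearest-neighbour path, so is `TS`, and
`TS m ≥ M n - 2 M 0` for `m ≥ n`; hence the future minimum `I` of `TS` satisfies
`I n ≥ M n - 2 M 0`, with equality exactly when `S` climbs back to the level `M n` after time `n`.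
Unfolding the definitions, `T⁻¹(TS) n = S n + 2 ((I n - M n) - (I 0 - M 0))`, and the gap
`I - M` takes its least value `-2 M 0` at a time where `M 0` is attained. So `T⁻¹(TS) = S` iff
after every time `n` the path climbs back to `M n`, which for an integer path says
`limsup S = sup S`. The dual statement is this one for the reflected path `n ↦ -S (-n)`, which
exchanges `T` with `T⁻¹` and the limsup at `+∞` with the liminf at `-∞`.
-/

open Set Filter Pointwise

lemma BddAbove.image_Iic_of_image_Iic {α β : Type*} [LinearOrder α] [LocallyFiniteOrder α]
    [SemilatticeSup β] [Nonempty β] {f : α → β} {a : α} (h : BddAbove (f '' Iic a)) (b : α) :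
    BddAbove (f '' Iic b) := by
  refine (h.union ((finite_Icc a b).image f).bddAbove).mono ?_
  rintro _ ⟨m, hm, rfl⟩
  rcases le_total m a with hma | ham
  · exact Or.inl ⟨m, hma, rfl⟩
  · exact Or.inr ⟨m, ⟨ham, hm⟩, rfl⟩

theorem Int.sSup_neg (s : Set ℤ) : sSup (-s) = -sInf s := by
  obtain rfl | hne := s.eq_empty_or_nonempty
  · simp
  by_cases hb : BddBelow s
  · exact csSup_neg hne hb
  · rw [Int.csInf_of_not_bddBelow hb, Int.csSup_of_not_bddAbove (bddAbove_neg.not.2 hb), neg_zero]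

theorem Int.sInf_neg (s : Set ℤ) : sInf (-s) = -sSup s := by
  rw [← neg_eq_iff_eq_neg, ← Int.sSup_neg, neg_neg]

section LimsupLiminf

variable {ι : Type*} {f : Filter ι}

lemma limsup_intCast_eq_iSup_iff (u : ι → ℤ) :
    limsup (fun i => ((u i : ℝ) : EReal)) f = ⨆ i, ((u i : ℝ) : EReal) ↔
      ∀ k, ∃ᶠ i in f, u k ≤ u i := by
  refine ⟨fun h k => ?_, fun h => le_antisymm limsup_le_iSup <| iSup_le fun k =>
    le_limsup_of_frequently_le <| (h k).mono fun i hi => by exact_mod_cast hi⟩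
  by_contra hk
  have hle : limsup (fun i => ((u i : ℝ) : EReal)) f ≤ ((u k - 1 : ℤ) : ℝ) :=
    limsup_le_of_le (by isBoundedDefault) <| (not_frequently.1 hk).mono fun i hi => by
      exact_mod_cast (by omega : u i ≤ u k - 1)
  have hge : ((u k : ℝ) : EReal) ≤ limsup (fun i => ((u i : ℝ) : EReal)) f :=
    h ▸ le_iSup (fun i => ((u i : ℝ) : EReal)) k
  have := hge.trans hle
  norm_cast at this
  omega

lemma liminf_intCast_eq_iInf_iff (u : ι → ℤ) :
    liminf (fun i => ((u i : ℝ) : EReal)) f = ⨅ i, ((u i : ℝ) : EReal) ↔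
      ∀ k, ∃ᶠ i in f, u i ≤ u k := by
  refine ⟨fun h k => ?_, fun h => le_antisymm (le_iInf fun k =>
    liminf_le_of_frequently_le <| (h k).mono fun i hi => by exact_mod_cast hi) iInf_le_liminf⟩
  by_contra hk
  have hge : (((u k + 1 : ℤ) : ℝ) : EReal) ≤ liminf (fun i => ((u i : ℝ) : EReal)) f :=
    le_liminf_of_le (by isBoundedDefault) <| (not_frequently.1 hk).mono fun i hi => by
      exact_mod_cast (by omega : u k + 1 ≤ u i)
  have hle : liminf (fun i => ((u i : ℝ) : EReal)) f ≤ ((u k : ℝ) : EReal) :=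
    h ▸ iInf_le (fun i => ((u i : ℝ) : EReal)) k
  have := hge.trans hle
  norm_cast at this
  omega

end LimsupLiminf

section Paths

variable {S : ℤ → ℤ}

lemma inS0.step (hS : inS0 S) (n : ℤ) : S n - S (n - 1) = 1 ∨ S n - S (n - 1) = -1 :=
  (abs_eq zero_le_one).1 (hS.2 n)

lemma ballMax_le {n c : ℤ} (h : ∀ m ≤ n, S m ≤ c) : ballMax S n ≤ c :=
  csSup_le (nonempty_Iic.image S) (by rintro _ ⟨m, hm, rfl⟩; exact h m hm)

variable (hB : BddAbove (S '' Iic 0))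
include hB

lemma le_ballMax {m n : ℤ} (h : m ≤ n) : S m ≤ ballMax S n :=
  le_csSup (hB.image_Iic_of_image_Iic n) ⟨m, h, rfl⟩

lemma exists_eq_ballMax (n : ℤ) : ∃ t ≤ n, S t = ballMax S n :=
  Int.csSup_mem (nonempty_Iic.image S) (hB.image_Iic_of_image_Iic n)

lemma ballMax_mono {m n : ℤ} (h : m ≤ n) : ballMax S m ≤ ballMax S n :=
  ballMax_le fun _ hk => le_ballMax hB (hk.trans h)

lemma max_ballMax_sub_one (n : ℤ) : max (ballMax S (n - 1)) (S n) = ballMax S n := by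
  refine le_antisymm (max_le (ballMax_mono hB (by omega)) (le_ballMax hB le_rfl)) ?_
  refine ballMax_le fun m hm => ?_
  rcases lt_or_eq_of_le hm with hm | rfl
  · exact le_max_of_le_left (le_ballMax hB (by omega))
  · exact le_max_right _ _

lemma exists_hit_ballMax (hS : inS0 S) {n m : ℤ} (hnm : n ≤ m) (h : ballMax S n ≤ S m) :
    ∃ t ≥ n, S t = ballMax S n ∧ ballMax S t = ballMax S n := by
  induction n, hnm using Int.leInductionDown with
  | base => exact ⟨m, le_rfl, le_antisymm (le_ballMax hB le_rfl) h, rfl⟩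
  | pred n _ ih =>
    by_cases hrec : ballMax S (n - 1) ≤ S (n - 1)
    · exact ⟨n - 1, le_rfl, le_antisymm (le_ballMax hB le_rfl) hrec, rfl⟩
    · have hmax := max_ballMax_sub_one hB n
      have hflat : ballMax S n = ballMax S (n - 1) := by
        rcases hS.step n with h' | h' <;> omega
      obtain ⟨t, ht, hSt, hMt⟩ := ih (hflat ▸ h)
      exact ⟨t, by omega, hflat ▸ hSt, hflat ▸ hMt⟩

lemma inS0_Tbb (hS : inS0 S) : inS0 (Tbb S) := by
  refine ⟨by simp [Tbb, hS.1], fun n => (abs_eq zero_le_one).2 ?_⟩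
  have hmax := max_ballMax_sub_one hB n
  have hprev := le_ballMax hB (le_refl (n - 1))
  simp only [Tbb]
  rcases hS.step n with h | h <;> omega

lemma ballMax_sub_le_Tbb {n m : ℤ} (h : n ≤ m) : ballMax S n - 2 * ballMax S 0 ≤ Tbb S m := by
  have := ballMax_mono hB h
  have := le_ballMax hB (le_refl m)
  simp only [Tbb]
  omega

lemma bddBelow_image_Tbb (n : ℤ) : BddBelow (Tbb S '' Ici n) :=
  ⟨_, by rintro _ ⟨m, hm, rfl⟩; exact ballMax_sub_le_Tbb hB hm⟩

lemma ballMax_sub_le_ballMin_Tbb (n : ℤ) : ballMax S n - 2 * ballMax S 0 ≤ ballMin (Tbb S) n :=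
  le_csInf (nonempty_Ici.image _) (by rintro _ ⟨m, hm, rfl⟩; exact ballMax_sub_le_Tbb hB hm)

lemma ballMin_Tbb_eq_iff (hS : inS0 S) (n : ℤ) :
    ballMin (Tbb S) n = ballMax S n - 2 * ballMax S 0 ↔ ∃ m ≥ n, ballMax S n ≤ S m := by
  refine ⟨fun h => ?_, fun ⟨m, hnm, hm⟩ => ?_⟩
  · by_contra! hlow
    have : ballMax S n + 1 - 2 * ballMax S 0 ≤ ballMin (Tbb S) n := by
      refine le_csInf (nonempty_Ici.image _) ?_
      rintro _ ⟨m, hm, rfl⟩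
      have := hlow m hm
      have := ballMax_mono hB hm
      simp only [Tbb]
      omega
    omega
  · obtain ⟨t, ht, hSt, hMt⟩ := exists_hit_ballMax hB hS hnm hm
    refine le_antisymm ?_ (ballMax_sub_le_ballMin_Tbb hB n)
    calc ballMin (Tbb S) n ≤ Tbb S t := csInf_le (bddBelow_image_Tbb hB n) ⟨t, ht, rfl⟩
      _ = ballMax S n - 2 * ballMax S 0 := by simp only [Tbb]; omega

omit hB in
lemma TbbInv_Tbb_apply (n : ℤ) :
    TbbInv (Tbb S) n =
      S n + 2 * ((ballMin (Tbb S) n - ballMax S n) - (ballMin (Tbb S) 0 - ballMax S 0)) := by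
  simp only [TbbInv, Tbb]
  ring

lemma TbbInv_Tbb_eq_iff (hS : inS0 S) :
    TbbInv (Tbb S) = S ↔ ∀ n, ∃ m ≥ n, ballMax S n ≤ S m := by
  simp only [← ballMin_Tbb_eq_iff hB hS, funext_iff, TbbInv_Tbb_apply]
  -- the gap `ballMin (Tbb S) - ballMax S` is smallest at a time `t ≤ 0` where `ballMax S 0` is hit
  obtain ⟨t, ht, hSt⟩ := exists_eq_ballMax hB 0
  have hMt : ballMax S t = ballMax S 0 :=
    le_antisymm (ballMax_mono hB ht) (hSt ▸ le_ballMax hB le_rfl)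
  have hgap := (ballMin_Tbb_eq_iff hB hS t).2 ⟨t, le_rfl, hMt.trans hSt.symm |>.le⟩
  refine ⟨fun h n => ?_, fun h n => ?_⟩
  · have := h n
    have := h t
    omega
  · have := h n
    have := h 0
    omega

lemma limsupEq_iff : limsupEq S ↔ ∀ n, ∃ m ≥ n, ballMax S n ≤ S m := by
  rw [limsupEq, limsup_intCast_eq_iSup_iff]
  refine ⟨fun h n => ?_, fun h k => frequently_atTop.2 fun N => ?_⟩
  · obtain ⟨t, ht, hSt⟩ := exists_eq_ballMax hB n
    obtain ⟨m, hm, h⟩ := frequently_atTop.1 (h t) n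
    exact ⟨m, hm, hSt ▸ h⟩
  · obtain ⟨m, hm, h⟩ := h (max k N)
    exact ⟨m, le_of_max_le_right hm, (le_ballMax hB (le_max_left k N)).trans h⟩

lemma Tbb_spec (hS : inS0 S) :
    (inS0 (Tbb S) ∧ BddBelow (Tbb S '' Ici 0)) ∧ (TbbInv (Tbb S) = S ↔ limsupEq S) :=
  ⟨⟨inS0_Tbb hB hS, bddBelow_image_Tbb hB 0⟩,
    (TbbInv_Tbb_eq_iff hB hS).trans (limsupEq_iff hB).symm⟩

end Paths

section Reflection

def reflect (S : ℤ → ℤ) : ℤ → ℤ := fun n => -S (-n)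

variable {S : ℤ → ℤ}

lemma reflect_involutive : Function.Involutive reflect := fun S => by
  funext n
  simp [reflect]

lemma inS0_reflect_iff : inS0 (reflect S) ↔ inS0 S := by
  suffices h : ∀ S : ℤ → ℤ, inS0 S → inS0 (reflect S) from
    ⟨fun hS => reflect_involutive S ▸ h _ hS, h S⟩
  intro S hS
  refine ⟨by simp [reflect, hS.1], fun n => ?_⟩
  have h := hS.2 (1 - n)
  rw [show 1 - n - 1 = -n by ring] at h
  simp only [reflect]
  rw [show -(n - 1) = 1 - n by ring]
  convert h using 2
  ring

lemma image_reflect_Iic (n : ℤ) : reflect S '' Iic n = -(S '' Ici (-n)) := by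
  ext y
  simp only [reflect, mem_image, mem_Iic, mem_Ici, Set.mem_neg]
  constructor
  · rintro ⟨m, hm, rfl⟩
    exact ⟨-m, by omega, by ring⟩
  · rintro ⟨m, hm, hy⟩
    exact ⟨-m, by omega, by rw [neg_neg, hy, neg_neg]⟩

lemma image_reflect_Ici (n : ℤ) : reflect S '' Ici n = -(S '' Iic (-n)) := by
  conv_rhs => rw [← reflect_involutive S, image_reflect_Iic, neg_neg, neg_neg]

lemma Tbb_reflect : Tbb (reflect S) = reflect (TbbInv S) := by
  funext n
  simp only [Tbb, TbbInv, ballMax, ballMin, reflect, image_reflect_Iic, Int.sSup_neg, neg_zero]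
  ring

lemma TbbInv_reflect : TbbInv (reflect S) = reflect (Tbb S) := by
  funext n
  simp only [Tbb, TbbInv, ballMax, ballMin, reflect, image_reflect_Ici, Int.sInf_neg, neg_zero]
  ring

lemma limsupEq_reflect_iff : limsupEq (reflect S) ↔ liminfEq S := by
  rw [limsupEq, liminfEq, limsup_intCast_eq_iSup_iff, liminf_intCast_eq_iInf_iff]
  simp only [frequently_atTop, frequently_atBot, reflect, neg_le_neg_iff]
  refine ⟨fun h k a => ?_, fun h k a => ?_⟩
  · obtain ⟨b, hb, h⟩ := h (-k) (-a)
    exact ⟨-b, by omega, by simpa using h⟩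
  · obtain ⟨b, hb, h⟩ := h (-k) (-a)
    exact ⟨-b, by omega, by simpa using h⟩

lemma TbbInv_spec (hS : inS0 S) (hB : BddBelow (S '' Ici 0)) :
    (inS0 (TbbInv S) ∧ BddAbove (TbbInv S '' Iic 0)) ∧ (Tbb (TbbInv S) = S ↔ liminfEq S) := by
  have hB' : BddAbove (reflect S '' Iic 0) := by
    rwa [image_reflect_Iic, neg_zero, bddAbove_neg]
  have h := Tbb_spec hB' (inS0_reflect_iff.2 hS)
  rwa [Tbb_reflect, inS0_reflect_iff, image_reflect_Ici, neg_zero, bddBelow_neg, TbbInv_reflect,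
    reflect_involutive.injective.eq_iff, limsupEq_reflect_iff] at h

end Reflection

/-- For `S ∈ 𝒮^T`, `TS ∈ 𝒮^{T⁻¹}` and `T⁻¹(TS) = S` iff
`limsup_{n→+∞} S n = sup_n S n`; dually for `S ∈ 𝒮^{T⁻¹}`.  Consequently the reversible set
`𝒮^{rev}` is as described. -/
theorem stmt_6 :
    (∀ S : ℤ → ℤ, inS0 S → BddAbove (S '' Set.Iic 0) →
      (inS0 (Tbb S) ∧ BddBelow (Tbb S '' Set.Ici 0)) ∧
      (TbbInv (Tbb S) = S ↔ limsupEq S)) ∧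
    (∀ S : ℤ → ℤ, inS0 S → BddBelow (S '' Set.Ici 0) →
      (inS0 (TbbInv S) ∧ BddAbove (TbbInv S '' Set.Iic 0)) ∧
      (Tbb (TbbInv S) = S ↔ liminfEq S)) ∧
    ({S : ℤ → ℤ | inS0 S ∧ BddAbove (S '' Set.Iic 0) ∧ BddBelow (S '' Set.Ici 0) ∧
        TbbInv (Tbb S) = S ∧ Tbb (TbbInv S) = S} =
      {S : ℤ → ℤ | inS0 S ∧ BddAbove (S '' Set.Iic 0) ∧ BddBelow (S '' Set.Ici 0) ∧
        limsupEq S ∧ liminfEq S}) := by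
  refine ⟨fun S hS hB => Tbb_spec hB hS, fun S hS hB => TbbInv_spec hS hB, ?_⟩
  ext S
  simp only [mem_ofPred_eq]
  exact and_congr_right fun hS => and_congr_right fun hA => and_congr_right fun hB =>
    and_congr (Tbb_spec hA hS).2 (TbbInv_spec hS hB).2
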